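/- arXiv:2111.09822 — 3 statements merged into one kernel-verified Lean document; each statement's English description precedes it below -/
import Mathlib

section
/- Any function f : ∀ (X : Type), X → X → X satisfying relational parametricity (for every relation R : A → B → Prop, if R a₁ b₁ and R a₂ b₂ then R (f A a₁ a₂) (f B b₁ b₂)) is either the first projection or the second projection: (∀ A a₁ a₂, f A a₁ a₂ = a₁) ∨ (∀ A a₁ a₂, f A a₁ a₂ = a₂). -/
theorem parametric_binary_is_projection
    (f : ∀ (X : Type), X → X → X)
    (hf : ∀ (A B : Type) (R : A → B → Prop) (a₁ a₂ : A) (b₁ b₂ : B),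
      R a₁ b₁ → R a₂ b₂ → R (f A a₁ a₂) (f B b₁ b₂)) :
    (∀ (A : Type) (a₁ a₂ : A), f A a₁ a₂ = a₁) ∨
    (∀ (A : Type) (a₁ a₂ : A), f A a₁ a₂ = a₂) := by
  have key : ∀ (A : Type) (a₁ a₂ : A),
      f A a₁ a₂ = (if f Bool true false then a₁ else a₂) := by
    intro A a₁ a₂
    have := hf A Bool (fun a b => a = if b then a₁ else a₂) a₁ a₂ true false rfl rfl
    simpa using this
  cases h : f Bool true false with
  | true => left; intro A a₁ a₂; rw [key A a₁ a₂, h, if_pos rfl]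
  | false => right; intro A a₁ a₂; rw [key A a₁ a₂, h]; simp
end

section
/- Any parametric function f : ∀ (X : Type), (X → X) → X → X is a Church numeral: there exists n : ℕ such that for all A, g : A → A, and a : A, f A g a = g^[n] a (the n-th iterate of g applied to a). -/
theorem parametric_is_church_numeral
    (f : ∀ (X : Type), (X → X) → X → X)
    (hf : ∀ (A B : Type) (R : A → B → Prop) (g : A → A) (h : B → B),
      (∀ a b, R a b → R (g a) (h b)) →
      ∀ (a : A) (b : B), R a b → R (f A g a) (f B h b)) :
    ∃ n : ℕ, ∀ (A : Type) (g : A → A) (a : A), f A g a = g^[n] a := by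
  refine ⟨f ℕ Nat.succ 0, fun A g a => ?_⟩
  have := hf A ℕ (fun x m => x = g^[m] a) g Nat.succ
    (fun x m hx => by simp [hx, Function.iterate_succ_apply']) a 0 rfl
  exact this
end

section
/- Proof-irrelevance of edges fails for the universe graph but is required for discreteness of function graphs with proof-relevant edges: concretely, if B is a reflexive graph with proof-relevant edges (E : N → N → Type) such that there exist nodes with two distinct parallel edges, then there exists a reflexive graph A and function-nodes f, g of A ⇒ B with f₀ = g₀ but with two distinct edges between f and g in the function graph. -/
structure RGraph where
  N : Type
  E : N → N → Type
  refl : ∀ n, E n n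

structure FunNode (A B : RGraph) where
  f₀ : A.N → B.N
  f₁ : ∀ a a', A.E a a' → B.E (f₀ a) (f₀ a')

def FunEdge (A B : RGraph) (f g : FunNode A B) : Type :=
  ∀ a a', A.E a a' → B.E (f.f₀ a) (g.f₀ a')

theorem proof_relevance_breaks_function_discreteness
    (B : RGraph) (b b' : B.N) (e₁ e₂ : B.E b b') (hne : e₁ ≠ e₂) :
    ∃ (A : RGraph) (f g : FunNode A B) (h₁ h₂ : FunEdge A B f g),
      f.f₀ = g.f₀ ∧ h₁ ≠ h₂ := by
  classical
  let A : RGraph :=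
    { N := Bool
      E := fun a a' => PLift (a ≤ a')
      refl := fun n => ⟨le_refl n⟩ }
  let f₀ : Bool → B.N := fun a => bif a then b' else b
  let f₁ : ∀ a a', A.E a a' → B.E (f₀ a) (f₀ a') := fun a a' e =>
    match a, a', e with
    | false, false, _ => B.refl b
    | false, true, _ => e₁
    | true, true, _ => B.refl b'
    | true, false, ⟨h⟩ => absurd h (by simp)
  let f : FunNode A B := ⟨f₀, f₁⟩
  let mk : B.E b b' → FunEdge A B f f := fun e a a' ed =>
    match a, a', ed with
    | false, false, _ => B.refl b
    | false, true, _ => e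
    | true, true, _ => B.refl b'
    | true, false, ⟨h⟩ => absurd h (by simp)
  refine ⟨A, f, f, mk e₁, mk e₂, rfl, fun hc => hne ?_⟩
  have := congrFun (congrFun (congrFun hc false) true) ⟨by simp⟩
  exact this
end
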